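/- Let f_θ : ℝᴰ → ℝ be defined by the recursion z⁽⁰⁾(r) = sin(Ω r + φ) with Ω ∈ ℝ^{T×D}, φ ∈ ℝᵀ; z⁽ℓ⁾(r) = ρ(W⁽ℓ⁾ z⁽ℓ⁻¹⁾(r) + b⁽ℓ⁾) componentwise for ℓ = 1, …, L−1, where ρ(x) = ∑_{k=0}^{K} αₖ xᵏ; and f_θ(r) = ⟨w⁽ᴸ⁾, z⁽ᴸ⁻¹⁾(r)⟩ + b⁽ᴸ⁾. Then there exist a finite set H ⊆ { ∑_{t=0}^{T−1} sₜ Ωₜ : sₜ ∈ ℤ, ∑ₜ |sₜ| ≤ K^{L−1} } (where Ωₜ are the rows of Ω), coefficients c_{ω'} ∈ ℝ and phases φ_{ω'} ∈ ℝ such that f_θ(r) = ∑_{ω'∈H} c_{ω'} sin(⟨ω', r⟩ + φ_{ω'}) for all r ∈ ℝᴰ. -/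

import Mathlib

open Real Finset

namespace INRaux

variable {T Dd : ℕ}

/-- inner product -/
def ip (ω r : Fin Dd → ℝ) : ℝ := ∑ i, ω i * r i

/-- integer combination frequency -/
def freqOf (Ω : Fin T → Fin Dd → ℝ) (s : Fin T → ℤ) : Fin Dd → ℝ :=
  ∑ t, (s t : ℝ) • Ω t

lemma ip_freqOf (Ω : Fin T → Fin Dd → ℝ) (s : Fin T → ℤ) (r : Fin Dd → ℝ) :
    ip (freqOf Ω s) r = ∑ t, (s t : ℝ) * ip (Ω t) r := by
  simp only [ip, freqOf, Finset.sum_apply, Pi.smul_apply, smul_eq_mul, Finset.sum_mul,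
    Finset.mul_sum]
  rw [Finset.sum_comm]
  exact Finset.sum_congr rfl fun t _ => Finset.sum_congr rfl fun i _ => by ring

lemma ip_freqOf_add (Ω : Fin T → Fin Dd → ℝ) (s1 s2 : Fin T → ℤ) (r : Fin Dd → ℝ) :
    ip (freqOf Ω (s1 + s2)) r = ip (freqOf Ω s1) r + ip (freqOf Ω s2) r := by
  simp only [ip_freqOf, ← Finset.sum_add_distrib]
  exact Finset.sum_congr rfl fun t _ => by push_cast [Pi.add_apply]; ring

lemma ip_freqOf_sub (Ω : Fin T → Fin Dd → ℝ) (s1 s2 : Fin T → ℤ) (r : Fin Dd → ℝ) :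
    ip (freqOf Ω (s1 - s2)) r = ip (freqOf Ω s1) r - ip (freqOf Ω s2) r := by
  simp only [ip_freqOf, ← Finset.sum_sub_distrib]
  exact Finset.sum_congr rfl fun t _ => by push_cast [Pi.sub_apply]; ring

/-- trig-sum class with weight bound B -/
def TS (Ω : Fin T → Fin Dd → ℝ) (B : ℕ) (g : (Fin Dd → ℝ) → ℝ) : Prop :=
  ∃ (n : ℕ) (s : Fin n → Fin T → ℤ) (a p : Fin n → ℝ),
    (∀ j, (∑ t, |s j t|) ≤ (B : ℤ)) ∧
    ∀ r, g r = ∑ j, a j * Real.sin (ip (freqOf Ω (s j)) r + p j)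

lemma TS_of_fintype {Ω : Fin T → Fin Dd → ℝ} {B : ℕ} {g : (Fin Dd → ℝ) → ℝ}
    {ι : Type} [Fintype ι] (s : ι → Fin T → ℤ) (a p : ι → ℝ)
    (hw : ∀ j, (∑ t, |s j t|) ≤ (B : ℤ))
    (hg : ∀ r, g r = ∑ j, a j * Real.sin (ip (freqOf Ω (s j)) r + p j)) :
    TS Ω B g := by
  refine ⟨Fintype.card ι, s ∘ (Fintype.equivFin ι).symm, a ∘ (Fintype.equivFin ι).symm,
    p ∘ (Fintype.equivFin ι).symm, fun j => hw _, fun r => ?_⟩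
  rw [hg r]
  exact (Fintype.sum_equiv (Fintype.equivFin ι).symm _ _ (fun j => rfl)).symm

lemma TS_mono {Ω : Fin T → Fin Dd → ℝ} {B B' : ℕ} {g} (h : TS Ω B g) (hBB : B ≤ B') :
    TS Ω B' g := by
  obtain ⟨n, s, a, p, hw, hg⟩ := h
  exact ⟨n, s, a, p, fun j => (hw j).trans (by exact_mod_cast hBB), hg⟩

lemma TS_const (Ω : Fin T → Fin Dd → ℝ) (B : ℕ) (c : ℝ) :
    TS Ω B (fun _ => c) := by
  refine ⟨1, fun _ => 0, fun _ => c, fun _ => Real.pi / 2, fun j => by simp, fun r => ?_⟩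
  simp [ip_freqOf, Real.sin_pi_div_two]

lemma TS_add {Ω : Fin T → Fin Dd → ℝ} {B : ℕ} {g h} (hg : TS Ω B g) (hh : TS Ω B h) :
    TS Ω B (fun r => g r + h r) := by
  obtain ⟨n, s, a, p, hw, hgr⟩ := hg
  obtain ⟨m, s', a', p', hw', hhr⟩ := hh
  refine TS_of_fintype (ι := Fin n ⊕ Fin m) (Sum.elim s s') (Sum.elim a a') (Sum.elim p p')
    (fun j => by cases j <;> simp [hw, hw']) (fun r => ?_)
  rw [Fintype.sum_sum_type]
  simp [hgr r, hhr r]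

lemma TS_smul {Ω : Fin T → Fin Dd → ℝ} {B : ℕ} {g} (c : ℝ) (hg : TS Ω B g) :
    TS Ω B (fun r => c * g r) := by
  obtain ⟨n, s, a, p, hw, hgr⟩ := hg
  refine ⟨n, s, fun j => c * a j, p, hw, fun r => ?_⟩
  show c * g r = _
  rw [hgr r, Finset.mul_sum]
  exact Finset.sum_congr rfl fun j _ => by ring

lemma sin_mul_sin (u v : ℝ) :
    Real.sin u * Real.sin v =
      (1/2) * Real.sin ((u - v) + Real.pi/2) + (-(1/2)) * Real.sin ((u + v) + Real.pi/2) := by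
  rw [Real.sin_add_pi_div_two, Real.sin_add_pi_div_two, Real.cos_sub, Real.cos_add]
  ring

lemma TS_mul {Ω : Fin T → Fin Dd → ℝ} {B B' : ℕ} {g h} (hg : TS Ω B g) (hh : TS Ω B' h) :
    TS Ω (B + B') (fun r => g r * h r) := by
  obtain ⟨n, s, a, p, hw, hgr⟩ := hg
  obtain ⟨m, s', a', p', hw', hhr⟩ := hh
  refine TS_of_fintype (ι := (Fin n × Fin m) × Bool)
    (fun j => if j.2 then s j.1.1 + s' j.1.2 else s j.1.1 - s' j.1.2)
    (fun j => if j.2 then -(a j.1.1 * a' j.1.2)/2 else (a j.1.1 * a' j.1.2)/2)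
    (fun j => if j.2 then p j.1.1 + p' j.1.2 + Real.pi/2 else p j.1.1 - p' j.1.2 + Real.pi/2)
    (fun j => ?_) (fun r => ?_)
  · rcases j with ⟨⟨j1, j2⟩, b⟩
    have h1 : (∑ t, |s j1 t + s' j2 t|) ≤ ((B : ℤ) + B') := by
      calc (∑ t, |s j1 t + s' j2 t|) ≤ ∑ t, (|s j1 t| + |s' j2 t|) :=
            Finset.sum_le_sum fun t _ => abs_add_le _ _
        _ = (∑ t, |s j1 t|) + ∑ t, |s' j2 t| := Finset.sum_add_distrib
        _ ≤ (B : ℤ) + B' := add_le_add (hw _) (hw' _)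
    have h2 : (∑ t, |s j1 t - s' j2 t|) ≤ ((B : ℤ) + B') := by
      calc (∑ t, |s j1 t - s' j2 t|) ≤ ∑ t, (|s j1 t| + |s' j2 t|) :=
            Finset.sum_le_sum fun t _ => abs_sub _ _
        _ = (∑ t, |s j1 t|) + ∑ t, |s' j2 t| := Finset.sum_add_distrib
        _ ≤ (B : ℤ) + B' := add_le_add (hw _) (hw' _)
    cases b
    · simp only [Bool.false_eq_true, if_false]
      exact_mod_cast h2
    · simp only [if_true]
      exact_mod_cast h1
  · rw [hgr r, hhr r, Finset.sum_mul_sum]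
    rw [Fintype.sum_prod_type]
    rw [Fintype.sum_prod_type]
    refine Finset.sum_congr rfl fun j1 _ => Finset.sum_congr rfl fun j2 _ => ?_
    rw [Fintype.sum_bool]
    simp only [Bool.false_eq_true, ite_true, ite_false]
    have key := sin_mul_sin (ip (freqOf Ω (s j1)) r + p j1) (ip (freqOf Ω (s' j2)) r + p' j2)
    rw [ip_freqOf_add, ip_freqOf_sub]
    have e1 : ip (freqOf Ω (s j1)) r + p j1 - (ip (freqOf Ω (s' j2)) r + p' j2) =
        ip (freqOf Ω (s j1)) r - ip (freqOf Ω (s' j2)) r + (p j1 - p' j2) := by ring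
    have e2 : ip (freqOf Ω (s j1)) r + p j1 + (ip (freqOf Ω (s' j2)) r + p' j2) =
        ip (freqOf Ω (s j1)) r + ip (freqOf Ω (s' j2)) r + (p j1 + p' j2) := by ring
    rw [e1, e2] at key
    calc a j1 * Real.sin (ip (freqOf Ω (s j1)) r + p j1) *
          (a' j2 * Real.sin (ip (freqOf Ω (s' j2)) r + p' j2))
        = (a j1 * a' j2) * (Real.sin (ip (freqOf Ω (s j1)) r + p j1) *
            Real.sin (ip (freqOf Ω (s' j2)) r + p' j2)) := by ring
      _ = _ := by rw [key]; ring_nf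

lemma TS_sum {Ω : Fin T → Fin Dd → ℝ} {B : ℕ} {ι : Type*} (m : Finset ι)
    (g : ι → (Fin Dd → ℝ) → ℝ) (h : ∀ i ∈ m, TS Ω B (g i)) :
    TS Ω B (fun r => ∑ i ∈ m, g i r) := by
  classical
  induction m using Finset.induction_on with
  | empty => simpa using TS_const Ω B 0
  | @insert x mm hx ih =>
    have := TS_add (h x (Finset.mem_insert_self x mm))
      (ih fun i hi => h i (Finset.mem_insert_of_mem hi))
    simpa [Finset.sum_insert hx] using this

lemma TS_pow {Ω : Fin T → Fin Dd → ℝ} {B : ℕ} {g} (hg : TS Ω B g) (k : ℕ) :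
    TS Ω (k * B) (fun r => g r ^ k) := by
  induction k with
  | zero => simpa using TS_const Ω 0 1
  | succ k ih =>
    have := TS_mul ih hg
    have h2 : TS Ω ((k + 1) * B) (fun r => g r ^ k * g r) := by
      rw [Nat.succ_mul] at *
      exact this
    simpa [pow_succ] using h2

lemma TS_sin (Ω : Fin T → Fin Dd → ℝ) (φ : Fin T → ℝ) (t : Fin T) :
    TS Ω 1 (fun r => Real.sin (ip (Ω t) r + φ t)) := by
  classical
  refine ⟨1, fun _ t' => if t' = t then 1 else 0, fun _ => 1, fun _ => φ t, fun j => ?_, fun r => ?_⟩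
  · simp [apply_ite (abs : ℤ → ℤ), Finset.sum_ite_eq']
  · have : ip (freqOf Ω (fun t' => if t' = t then 1 else 0)) r = ip (Ω t) r := by
      rw [ip_freqOf]
      simp [Finset.sum_ite_eq', apply_ite (fun x : ℤ => (x : ℝ))]
    simp [this]

/-- amplitude-phase combination -/
lemma amp_phase (A B : ℝ) : ∃ C P : ℝ, ∀ x, A * Real.sin x + B * Real.cos x = C * Real.sin (x + P) := by
  by_cases h : A = 0 ∧ B = 0
  · exact ⟨0, 0, fun x => by simp [h.1, h.2]⟩
  · set w : ℂ := ⟨A, B⟩ with hw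
    have hw0 : w ≠ 0 := fun h0 => h (by simpa [Complex.ext_iff] using h0)
    have habs : ‖w‖ ≠ 0 := by simpa using hw0
    refine ⟨‖w‖, w.arg, fun x => ?_⟩
    rw [Real.sin_add]
    have hc : Real.cos w.arg = A / ‖w‖ := by
      rw [Complex.cos_arg hw0]
    have hs : Real.sin w.arg = B / ‖w‖ := by
      rw [Complex.sin_arg]
    rw [hc, hs]
    field_simp

lemma TS_congr {Ω : Fin T → Fin Dd → ℝ} {B : ℕ} {g g'} (h : ∀ r, g r = g' r)
    (hg : TS Ω B g) : TS Ω B g' := by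
  obtain ⟨n, s, a, p, hw, hgr⟩ := hg
  exact ⟨n, s, a, p, hw, fun r => (h r) ▸ hgr r⟩

lemma TS_to_repr {Ω : Fin T → Fin Dd → ℝ} {B : ℕ} {f : (Fin Dd → ℝ) → ℝ} (hf : TS Ω B f) :
    ∃ (H : Finset (Fin Dd → ℝ)) (c φ' : (Fin Dd → ℝ) → ℝ),
      (↑H ⊆ {ω' : Fin Dd → ℝ | ∃ s : Fin T → ℤ,
          (∑ t, |s t|) ≤ (B : ℤ) ∧ ω' = ∑ t, (s t : ℝ) • Ω t}) ∧
      ∀ r : Fin Dd → ℝ,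
        f r = ∑ ω' ∈ H, c ω' * Real.sin ((∑ i, ω' i * r i) + φ' ω') := by
  classical
  obtain ⟨n, s, a, p, hw, hg⟩ := hf
  set fr : Fin n → (Fin Dd → ℝ) := fun j => freqOf Ω (s j) with hfr
  set A : (Fin Dd → ℝ) → ℝ :=
    fun ω' => ∑ j ∈ Finset.univ.filter (fun j => fr j = ω'), a j * Real.cos (p j) with hA
  set Bc : (Fin Dd → ℝ) → ℝ :=
    fun ω' => ∑ j ∈ Finset.univ.filter (fun j => fr j = ω'), a j * Real.sin (p j) with hBc
  refine ⟨Finset.image fr Finset.univ,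
    fun ω' => (amp_phase (A ω') (Bc ω')).choose,
    fun ω' => (amp_phase (A ω') (Bc ω')).choose_spec.choose, ?_, ?_⟩
  · intro ω' hω'
    simp only [Finset.coe_image, Set.mem_image, Finset.mem_coe, Finset.mem_univ] at hω'
    obtain ⟨j, _, rfl⟩ := hω'
    exact ⟨s j, hw j, rfl⟩
  · intro r
    have spec : ∀ ω' x, A ω' * Real.sin x + Bc ω' * Real.cos x =
        (amp_phase (A ω') (Bc ω')).choose *
          Real.sin (x + (amp_phase (A ω') (Bc ω')).choose_spec.choose) :=
      fun ω' => (amp_phase (A ω') (Bc ω')).choose_spec.choose_spec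
    rw [hg r, ← Finset.sum_fiberwise_of_maps_to (g := fr)
      (fun j _ => Finset.mem_image_of_mem fr (Finset.mem_univ j))]
    refine Finset.sum_congr rfl fun ω' _ => ?_
    have step1 : ∑ j ∈ Finset.univ.filter (fun j => fr j = ω'),
        a j * Real.sin (ip (freqOf Ω (s j)) r + p j)
        = A ω' * Real.sin (ip ω' r) + Bc ω' * Real.cos (ip ω' r) := by
      rw [hA, hBc]
      simp only [Finset.sum_mul, ← Finset.sum_add_distrib]
      refine Finset.sum_congr rfl fun j hj => ?_
      have hj' : fr j = ω' := (Finset.mem_filter.mp hj).2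
      rw [show ip (freqOf Ω (s j)) r = ip ω' r from by rw [← hj']]
      rw [Real.sin_add]
      ring
    rw [step1, spec ω' (ip ω' r)]
    rfl

end INRaux


open INRaux

/-- Theorem 1 (expressive power of INRs): an L-layer network with sinusoidal
input mapping `sin(Ω r + φ)` and degree-K polynomial activations represents a
finite sum of sinusoids whose frequencies are integer combinations of the rows
of Ω with total integer weight at most K^(L-1). -/
theorem stmt_4 {Dd L K : ℕ} (hL : 1 ≤ L)
    (F : ℕ → ℕ)
    (Ω : Fin (F 0) → Fin Dd → ℝ) (φ : Fin (F 0) → ℝ)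
    (α : Fin (K + 1) → ℝ)
    (W : (ℓ : ℕ) → Fin (F ℓ) → Fin (F (ℓ - 1)) → ℝ)
    (b : (ℓ : ℕ) → Fin (F ℓ) → ℝ)
    (wL : Fin (F (L - 1)) → ℝ) (bL : ℝ)
    (z : (ℓ : ℕ) → (Fin Dd → ℝ) → Fin (F ℓ) → ℝ)
    (hz0 : ∀ r t, z 0 r t = Real.sin ((∑ i, Ω t i * r i) + φ t))
    (hz : ∀ ℓ, 1 ≤ ℓ → ℓ ≤ L - 1 → ∀ r m,
      z ℓ r m = ∑ k : Fin (K + 1),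
        α k * ((∑ n, W ℓ m n * z (ℓ - 1) r n) + b ℓ m) ^ (k : ℕ))
    (f : (Fin Dd → ℝ) → ℝ)
    (hf : ∀ r, f r = (∑ m, wL m * z (L - 1) r m) + bL) :
    ∃ (H : Finset (Fin Dd → ℝ)) (c φ' : (Fin Dd → ℝ) → ℝ),
      (↑H ⊆ {ω' : Fin Dd → ℝ | ∃ s : Fin (F 0) → ℤ,
          (∑ t, |s t|) ≤ (K : ℤ) ^ (L - 1) ∧ ω' = ∑ t, (s t : ℝ) • Ω t}) ∧
      ∀ r : Fin Dd → ℝ,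
        f r = ∑ ω' ∈ H, c ω' * Real.sin ((∑ i, ω' i * r i) + φ' ω') := by
  -- every layer is a trig sum
  have main : ∀ ℓ, ℓ ≤ L - 1 → ∀ m, TS Ω (K ^ ℓ) (fun r => z ℓ r m) := by
    intro ℓ
    induction ℓ with
    | zero =>
      intro _ t
      refine TS_congr (fun r => ?_) (TS_sin Ω φ t)
      rw [hz0 r t]; rfl
    | succ ℓ ih =>
      intro hℓ m
      have hℓ' : ℓ ≤ L - 1 := Nat.le_of_succ_le hℓ
      have hlin : TS Ω (K ^ ℓ)
          (fun r => (∑ n, W (ℓ + 1) m n * z ℓ r n) + b (ℓ + 1) m) := by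
        refine TS_add (TS_sum Finset.univ _ fun n _ => ?_) (TS_const Ω _ _)
        exact TS_smul _ (ih hℓ' n)
      refine TS_congr (fun r => ?_)
        (TS_sum (B := K ^ (ℓ + 1)) Finset.univ
          (fun k r => α k * ((∑ n, W (ℓ + 1) m n * z ℓ r n) + b (ℓ + 1) m) ^ (k : ℕ))
          (fun k _ => ?_))
      · rw [hz (ℓ + 1) (Nat.succ_le_succ (Nat.zero_le ℓ)) hℓ r m]; rfl
      · refine TS_mono (TS_smul _ (TS_pow hlin (k : ℕ))) ?_
        calc (k : ℕ) * K ^ ℓ ≤ K * K ^ ℓ :=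
              Nat.mul_le_mul_right _ (Nat.lt_succ_iff.mp k.isLt)
          _ = K ^ (ℓ + 1) := (pow_succ' K ℓ).symm
  have hfTS : TS Ω (K ^ (L - 1)) f := by
    refine TS_congr (fun r => (hf r).symm)
      (TS_add (TS_sum Finset.univ _ fun m _ => TS_smul _ (main (L - 1) le_rfl m))
        (TS_const Ω _ _))
  obtain ⟨H, c, φ', hsub, hrepr⟩ := TS_to_repr hfTS
  refine ⟨H, c, φ', ?_, hrepr⟩
  intro ω' hω'
  obtain ⟨s, hs, hω⟩ := hsub hω'
  exact ⟨s, by push_cast at hs ⊢; exact hs, hω⟩
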